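/- The six-column allocation matrix Ξ defined with tilt angle α ∈ (0, π/2), arm length L > 0, and thrust-torque coefficient k_f > 0 (as in equation (3) of the paper) is invertible, provided sin α ≠ 0, cos α ≠ 0, and L s α − k_f c α ≠ 0 and L c α + k_f s α ≠ 0. -/

import Mathlib

open Real

/-- Thrust allocation matrix of the tilted-rotor hexacopter, equation (3) of the paper. -/
noncomputable def Xi (α L kf : ℝ) : Matrix (Fin 6) (Fin 6) ℝ :=
  let P₁ := L * cos α + kf * sin α
  let P₂ := L * sin α - kf * cos α
  !![ (1/2) * sin α, -sin α, (1/2) * sin α, (1/2) * sin α, -sin α, (1/2) * sin α;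
     -(Real.sqrt 3 / 2) * sin α, 0, (Real.sqrt 3 / 2) * sin α,
       -(Real.sqrt 3 / 2) * sin α, 0, (Real.sqrt 3 / 2) * sin α;
      cos α, cos α, cos α, cos α, cos α, cos α;
     -(1/2) * P₁, -P₁, -(1/2) * P₁, (1/2) * P₁, P₁, (1/2) * P₁;
      (Real.sqrt 3 / 2) * P₁, 0, -(Real.sqrt 3 / 2) * P₁,
       -(Real.sqrt 3 / 2) * P₁, 0, (Real.sqrt 3 / 2) * P₁;
      P₂, -P₂, P₂, -P₂, P₂, -P₂]

set_option maxHeartbeats 1000000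
lemma cons_val_five' {α : Type*} {m : ℕ} (x : α) (u : Fin (m + 5) → α) :
    Matrix.vecCons x u 5 =
      Matrix.vecHead (Matrix.vecTail (Matrix.vecTail (Matrix.vecTail (Matrix.vecTail u)))) :=
  rfl

lemma reindex_fromBlocks6 (A B C D : Matrix (Fin 3) (Fin 3) ℝ) :
    (Matrix.reindex finSumFinEquiv finSumFinEquiv (Matrix.fromBlocks A B C D) :
      Matrix (Fin 6) (Fin 6) ℝ) =
    !![A 0 0, A 0 1, A 0 2, B 0 0, B 0 1, B 0 2;
       A 1 0, A 1 1, A 1 2, B 1 0, B 1 1, B 1 2;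
       A 2 0, A 2 1, A 2 2, B 2 0, B 2 1, B 2 2;
       C 0 0, C 0 1, C 0 2, D 0 0, D 0 1, D 0 2;
       C 1 0, C 1 1, C 1 2, D 1 0, D 1 1, D 1 2;
       C 2 0, C 2 1, C 2 2, D 2 0, D 2 1, D 2 2] := by
  ext i j
  fin_cases i <;> fin_cases j <;> rfl

noncomputable def Km : Matrix (Fin 6) (Fin 6) ℝ :=
  Matrix.reindex (finSumFinEquiv : Fin 3 ⊕ Fin 3 ≃ Fin 6) (finSumFinEquiv : Fin 3 ⊕ Fin 3 ≃ Fin 6)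
    (Matrix.fromBlocks (1 : Matrix (Fin 3) (Fin 3) ℝ) 1 1 (-1))

lemma Km_eq : Km = !![1,0,0,1,0,0; 0,1,0,0,1,0; 0,0,1,0,0,1;
    1,0,0,-1,0,0; 0,1,0,0,-1,0; 0,0,1,0,0,-1] := by
  rw [Km, reindex_fromBlocks6]
  norm_num [Matrix.one_apply, Matrix.neg_apply, Fin.ext_iff]

lemma Km_det : Km.det = -8 := by
  rw [Km, Matrix.det_reindex_self, Matrix.det_fromBlocks_one₁₁]
  have h : ((-1 : Matrix (Fin 3) (Fin 3) ℝ) - 1 * 1) = !![-2,0,0; 0,-2,0; 0,0,-2] := by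
    ext i j
    fin_cases i <;> fin_cases j <;>
      simp [Matrix.one_apply, Matrix.neg_apply, Matrix.sub_apply, Matrix.vecHead,
        Matrix.vecTail] <;> norm_num
  rw [h, Matrix.det_fin_three]
  norm_num [Matrix.cons_val_two, Matrix.vecHead, Matrix.vecTail]

theorem stmt_14 (α L kf : ℝ) (hα : α ∈ Set.Ioo 0 (π / 2)) (hL : 0 < L) (hkf : 0 < kf)
    (hs : sin α ≠ 0) (hc : cos α ≠ 0)
    (hP₂ : L * sin α - kf * cos α ≠ 0) (hP₁ : L * cos α + kf * sin α ≠ 0) :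
    IsUnit (Xi α L kf).det := by
  have h3 : Real.sqrt 3 * Real.sqrt 3 = 3 := Real.mul_self_sqrt (by norm_num)
  set A : Matrix (Fin 3) (Fin 3) ℝ :=
    !![sin α, -2*sin α, sin α; -(Real.sqrt 3)*sin α, 0, Real.sqrt 3*sin α;
       2*cos α, 2*cos α, 2*cos α] with hA
  set B : Matrix (Fin 3) (Fin 3) ℝ :=
    !![-(L * cos α + kf * sin α), -2*(L * cos α + kf * sin α), -(L * cos α + kf * sin α);
       Real.sqrt 3*(L * cos α + kf * sin α), 0, -(Real.sqrt 3)*(L * cos α + kf * sin α);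
       2*(L * sin α - kf * cos α), -2*(L * sin α - kf * cos α),
         2*(L * sin α - kf * cos α)] with hB
  have hXiK : Xi α L kf * Km =
      Matrix.reindex finSumFinEquiv finSumFinEquiv (Matrix.fromBlocks A 0 0 B) := by
    rw [Km_eq, reindex_fromBlocks6]
    ext i j
    fin_cases i <;> fin_cases j <;>
      simp [Xi, Matrix.mul_apply, Fin.sum_univ_six, hA, hB, Matrix.cons_val_two,
        Matrix.cons_val_three, Matrix.cons_val_four, cons_val_five', Matrix.vecHead,
        Matrix.vecTail] <;> ring
  have hAdet : A.det = -12 * Real.sqrt 3 * sin α ^ 2 * cos α := by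
    rw [hA, Matrix.det_fin_three]
    simp
    ring
  have hBdet : B.det =
      12 * Real.sqrt 3 * (L * cos α + kf * sin α) ^ 2 * (L * sin α - kf * cos α) := by
    rw [hB, Matrix.det_fin_three]
    simp
    ring
  have key : (Xi α L kf).det * Km.det = A.det * B.det := by
    rw [← Matrix.det_mul, hXiK, Matrix.det_reindex_self, Matrix.det_fromBlocks_zero₂₁]
  rw [Km_det, hAdet, hBdet] at key
  have hXidet : (Xi α L kf).det =
      54 * sin α ^ 2 * cos α * (L * cos α + kf * sin α) ^ 2 * (L * sin α - kf * cos α) := by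
    linear_combination (-1/8 : ℝ) * key +
      (18 * sin α ^ 2 * cos α * (L * cos α + kf * sin α) ^ 2 * (L * sin α - kf * cos α)) * h3
  rw [hXidet]
  exact isUnit_iff_ne_zero.mpr
    (mul_ne_zero (mul_ne_zero (mul_ne_zero (mul_ne_zero (by norm_num) (pow_ne_zero 2 hs)) hc)
      (pow_ne_zero 2 hP₁)) hP₂)
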